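/- Let H be an r-uniform hypergraph (r ≥ 2) on n vertices, let k ≥ 1, and let Ĥ(k) be obtained from H by attaching at each vertex i exactly k pendant hyperedges, each consisting of i together with r−1 new vertices (all added vertices distinct). (a) If (θ, w) is an eigenpair of the Laplacian L(H) and μ ∈ ℂ with μ ≠ 1 satisfies (μ − θ − k)(1 − μ)^{r−1} + k = 0, then μ is an eigenvalue of L(Ĥ(k)), with eigenvector assigning w_i to each original vertex i and w_i/(1 − μ) to every new vertex of every pendant hyperedge at i. (b) If (β, z) is an eigenpair of the signless Laplacian Q(H) and μ ∈ ℂ with μ ≠ 1 satisfies (μ − β − k)(μ − 1)^{r−1} − k = 0, then μ is an eigenvalue of Q(Ĥ(k)), with eigenvector assigning z_i to each original vertex i and z_i/(μ − 1) to every new vertex of every pendant hyperedge at i. -/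
import Mathlib


open Finset
open scoped Classical

/-- The adjacency hypermatrix entry of an `r`-uniform hypergraph with hyperedge set `E`:
the `(j, f 0, …, f (r-2))`-entry is `1/(r-1)!` when the indices are pairwise distinct and
form a hyperedge, and `0` otherwise. -/
noncomputable def adjEntry (r : ℕ) {V : Type*} [Fintype V] [DecidableEq V]
    (E : Finset (Finset V)) (j : V) (f : Fin (r - 1) → V) : ℂ :=
  if Function.Injective f ∧ (∀ i, f i ≠ j) ∧ insert j (Finset.image f Finset.univ) ∈ E then
    1 / ((r - 1).factorial : ℂ)
  else 0

/-- The degree of a vertex: the number of hyperedges containing it. -/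
def hdegree {V : Type*} [DecidableEq V] (E : Finset (Finset V)) (v : V) : ℕ :=
  (E.filter fun e => v ∈ e).card

/-- The Laplacian hypermatrix entry `L = D - A`. -/
noncomputable def lapEntry (r : ℕ) {V : Type*} [Fintype V] [DecidableEq V]
    (E : Finset (Finset V)) (j : V) (f : Fin (r - 1) → V) : ℂ :=
  (if ∀ i, f i = j then (hdegree E j : ℂ) else 0) - adjEntry r E j f

/-- The signless Laplacian hypermatrix entry `Q = D + A`. -/
noncomputable def signlessEntry (r : ℕ) {V : Type*} [Fintype V] [DecidableEq V]
    (E : Finset (Finset V)) (j : V) (f : Fin (r - 1) → V) : ℂ :=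
  (if ∀ i, f i = j then (hdegree E j : ℂ) else 0) + adjEntry r E j f

/-- `(lam, x)` is an eigenpair of the order-`r` hypermatrix `T` (represented by its
first index and the remaining `r-1` indices). -/
def IsEigenpair {V : Type*} [Fintype V] (r : ℕ)
    (T : V → (Fin (r - 1) → V) → ℂ) (lam : ℂ) (x : V → ℂ) : Prop :=
  x ≠ 0 ∧ ∀ j, ∑ f : Fin (r - 1) → V, T j f * ∏ i, x (f i) = lam * x j ^ (r - 1)

/-- A vector is non-main if the sum over all `(r-1)`-subsets `S` of the vertex set of
`∏_{i ∈ S} x i` vanishes. -/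
def IsNonMainVec {V : Type*} [Fintype V] [DecidableEq V] (r : ℕ) (x : V → ℂ) : Prop :=
  ∑ S ∈ Finset.univ.powersetCard (r - 1), ∏ i ∈ S, x i = 0

/-- An eigenvalue is non-main if it has some non-main eigenvector. -/
def IsNonMainEigenvalue {V : Type*} [Fintype V] [DecidableEq V] (r : ℕ)
    (T : V → (Fin (r - 1) → V) → ℂ) (lam : ℂ) : Prop :=
  ∃ x, IsEigenpair r T lam x ∧ IsNonMainVec r x

/-- The hypergraph `Ĥ(k)` obtained from `H` (on `Fin n`) by attaching at each vertex `i`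
exactly `k` pendant hyperedges; the `c`-th pendant hyperedge at `i` consists of `i`
together with the `r - 1` new vertices `(i, c, j)`. -/
def pendantEdges (r n k : ℕ) (E : Finset (Finset (Fin n))) :
    Finset (Finset (Fin n ⊕ Fin n × Fin k × Fin (r - 1))) :=
  E.image (fun e => e.map ⟨Sum.inl, Sum.inl_injective⟩) ∪
  Finset.univ.image (fun p : Fin n × Fin k =>
    insert (Sum.inl p.1) (Finset.univ.image fun j : Fin (r - 1) => Sum.inr (p.1, p.2, j)))

lemma inj_image_sum {V : Type*} [Fintype V] [DecidableEq V] (m : ℕ) (s : Finset V)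
    (hs : s.card = m) (x : V → ℂ) :
    ∑ f : Fin m → V, (if Function.Injective f ∧ Finset.image f Finset.univ = s then
      ∏ i, x (f i) else 0) = (m.factorial : ℂ) * ∏ v ∈ s, x v := by
  rw [← Finset.sum_filter]
  have hconst : ∀ f ∈ Finset.univ.filter
      (fun f : Fin m → V => Function.Injective f ∧ Finset.image f Finset.univ = s),
      ∏ i, x (f i) = ∏ v ∈ s, x v := by
    intro f hf
    rw [Finset.mem_filter] at hf
    rw [← hf.2.2, Finset.prod_image (fun a _ b _ h => hf.2.1 h)]
  rw [Finset.sum_congr rfl hconst, Finset.sum_const, nsmul_eq_mul]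
  congr 1
  have : (Finset.univ.filter
      (fun f : Fin m → V => Function.Injective f ∧ Finset.image f Finset.univ = s)).card
      = Fintype.card (Fin m ↪ {v // v ∈ s}) := by
    rw [← Fintype.card_subtype]
    apply Fintype.card_congr
    refine
      { toFun := fun f => ⟨fun i => ⟨f.1 i, by
          have hm := Finset.mem_image_of_mem f.1 (Finset.mem_univ i)
          rwa [f.2.2] at hm⟩,
          fun a b h => f.2.1 (congrArg Subtype.val h)⟩
        invFun := fun g => ⟨fun i => (g i : V), ⟨fun a b h => g.injective (Subtype.ext h), ?_⟩⟩
        left_inv := fun f => Subtype.ext rfl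
        right_inv := fun g => by ext i; rfl }
    apply Finset.eq_of_subset_of_card_le
    · intro v hv
      rw [Finset.mem_image] at hv
      obtain ⟨i, _, rfl⟩ := hv
      exact (g i).2
    · rw [Finset.card_image_of_injective _ (fun a b h => g.injective (Subtype.ext h)),
        Finset.card_univ, Fintype.card_fin, hs]
  rw [this, Fintype.card_embedding_eq, Fintype.card_coe, hs, Fintype.card_fin,
    Nat.descFactorial_self]

lemma D_sum {V : Type*} [Fintype V] [DecidableEq V] (m : ℕ) (d : ℂ) (j : V) (x : V → ℂ) :
    ∑ f : Fin m → V, (if ∀ i, f i = j then d else 0) * ∏ i, x (f i) = d * x j ^ m := by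
  rw [Finset.sum_eq_single (fun _ => j)]
  · simp [Finset.prod_const]
  · intro f _ hf
    have : ¬ ∀ i, f i = j := fun h => hf (funext h)
    simp [this]
  · simp

lemma adj_sum {V : Type*} [Fintype V] [DecidableEq V] (r : ℕ)
    (E : Finset (Finset V)) (hu : ∀ e ∈ E, e.card = r) (j : V) (x : V → ℂ) :
    ∑ f : Fin (r - 1) → V, adjEntry r E j f * ∏ i, x (f i)
      = ∑ e ∈ E.filter (fun e => j ∈ e), ∏ v ∈ e.erase j, x v := by
  have key : ∀ f : Fin (r - 1) → V,
      adjEntry r E j f * ∏ i, x (f i) =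
      ∑ e ∈ E.filter (fun e => j ∈ e),
        (if Function.Injective f ∧ Finset.image f Finset.univ = e.erase j then
          (1 / ((r - 1).factorial : ℂ)) * ∏ i, x (f i) else 0) := by
    intro f
    unfold adjEntry
    by_cases hP : Function.Injective f ∧ (∀ i, f i ≠ j) ∧
        insert j (Finset.image f Finset.univ) ∈ E
    · rw [if_pos hP, Finset.sum_eq_single (insert j (Finset.image f Finset.univ))]
      · have hjim : j ∉ Finset.image f Finset.univ := by
          simp only [Finset.mem_image, Finset.mem_univ, true_and, not_exists]
          exact fun i => hP.2.1 i
        rw [if_pos ⟨hP.1, by rw [Finset.erase_insert hjim]⟩]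
      · intro e he hne
        rw [if_neg]
        rintro ⟨h1, h2⟩
        have hje : j ∈ e := (Finset.mem_filter.1 he).2
        have he2 : insert j (Finset.image f Finset.univ) = e := by
          rw [h2, Finset.insert_erase hje]
        exact hne he2.symm
      · intro h
        exact absurd (Finset.mem_filter.2 ⟨hP.2.2,
          Finset.mem_insert_self j (Finset.image f Finset.univ)⟩) h
    · rw [if_neg hP, zero_mul]
      symm
      apply Finset.sum_eq_zero
      intro e he
      rw [if_neg]
      rintro ⟨h1, h2⟩
      apply hP
      have hje : j ∈ e := (Finset.mem_filter.1 he).2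
      have hne : ∀ i, f i ≠ j := by
        intro i hi
        have hm : f i ∈ e.erase j := h2 ▸ Finset.mem_image_of_mem f (Finset.mem_univ i)
        exact (Finset.mem_erase.1 hm).1 hi
      refine ⟨h1, hne, ?_⟩
      rw [h2, Finset.insert_erase hje]
      exact (Finset.mem_filter.1 he).1
  rw [Finset.sum_congr rfl (fun f _ => key f), Finset.sum_comm]
  apply Finset.sum_congr rfl
  intro e he
  have hje : j ∈ e := (Finset.mem_filter.1 he).2
  have hcard : (e.erase j).card = r - 1 := by
    rw [Finset.card_erase_of_mem hje, hu e (Finset.mem_filter.1 he).1]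
  have hfac : (((r - 1).factorial : ℕ) : ℂ) ≠ 0 :=
    Nat.cast_ne_zero.2 (Nat.factorial_ne_zero _)
  calc ∑ f : Fin (r - 1) → V,
        (if Function.Injective f ∧ Finset.image f Finset.univ = e.erase j then
          (1 / ((r - 1).factorial : ℂ)) * ∏ i, x (f i) else 0)
      = (1 / ((r - 1).factorial : ℂ)) * ∑ f : Fin (r - 1) → V,
        (if Function.Injective f ∧ Finset.image f Finset.univ = e.erase j then
          ∏ i, x (f i) else 0) := by
        rw [Finset.mul_sum]
        exact Finset.sum_congr rfl fun f _ => by rw [mul_ite, mul_zero]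
    _ = ∏ v ∈ e.erase j, x v := by
        rw [inj_image_sum _ _ hcard, ← mul_assoc]
        field_simp

def pend (r n k : ℕ) (i : Fin n) (c : Fin k) : Finset (Fin n ⊕ Fin n × Fin k × Fin (r - 1)) :=
  insert (Sum.inl i) (Finset.univ.image fun j : Fin (r - 1) => Sum.inr (i, c, j))

lemma pendantEdges_eq (r n k : ℕ) (E : Finset (Finset (Fin n))) :
    pendantEdges r n k E =
      E.image (fun e => e.map ⟨Sum.inl, Sum.inl_injective⟩) ∪
      Finset.univ.image (fun p : Fin n × Fin k => pend r n k p.1 p.2) := rfl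

lemma inr_injective (r n k : ℕ) (i : Fin n) (c : Fin k) :
    Function.Injective (fun j : Fin (r - 1) => (Sum.inr (i, c, j) :
      Fin n ⊕ Fin n × Fin k × Fin (r - 1))) := by
  intro a b h
  simpa using h

lemma inl_notMem_image (r n k : ℕ) (i i' : Fin n) (c : Fin k) :
    Sum.inl i' ∉ (Finset.univ.image fun j : Fin (r - 1) =>
      (Sum.inr (i, c, j) : Fin n ⊕ Fin n × Fin k × Fin (r - 1))) := by simp

lemma pend_card (r n k : ℕ) (hr : 2 ≤ r) (i : Fin n) (c : Fin k) :
    (pend r n k i c).card = r := by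
  rw [pend, Finset.card_insert_of_notMem (inl_notMem_image r n k i i c),
    Finset.card_image_of_injective _ (inr_injective r n k i c), Finset.card_univ,
    Fintype.card_fin]
  omega

lemma mem_pend_inl (r n k : ℕ) (i i' : Fin n) (c : Fin k) :
    Sum.inl i' ∈ pend r n k i c ↔ i' = i := by simp [pend]

lemma mem_pend_inr (r n k : ℕ) (i a : Fin n) (c b : Fin k) (t : Fin (r - 1)) :
    Sum.inr (a, b, t) ∈ pend r n k i c ↔ a = i ∧ b = c := by
  simp only [pend, Finset.mem_insert, Finset.mem_image, Finset.mem_univ, true_and]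
  constructor
  · rintro (h | ⟨j, hj⟩)
    · exact absurd h (by simp)
    · have := Sum.inr_injective hj
      rw [Prod.ext_iff] at this
      obtain ⟨h1, h2⟩ := this
      rw [Prod.ext_iff] at h2
      exact ⟨h1.symm, h2.1.symm⟩
  · rintro ⟨rfl, rfl⟩
    exact Or.inr ⟨t, rfl⟩

lemma mem_pendantEdges (r n k : ℕ) (E : Finset (Finset (Fin n)))
    (e : Finset (Fin n ⊕ Fin n × Fin k × Fin (r - 1))) :
    e ∈ pendantEdges r n k E ↔
      (∃ e₀ ∈ E, e = e₀.map ⟨Sum.inl, Sum.inl_injective⟩) ∨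
      ∃ i c, e = pend r n k i c := by
  rw [pendantEdges_eq]
  simp only [Finset.mem_union, Finset.mem_image, Finset.mem_univ, true_and]
  constructor
  · rintro (⟨e₀, he₀, rfl⟩ | ⟨⟨i, c⟩, h⟩)
    · exact Or.inl ⟨e₀, he₀, rfl⟩
    · exact Or.inr ⟨i, c, h.symm⟩
  · rintro (⟨e₀, he₀, rfl⟩ | ⟨i, c, rfl⟩)
    · exact Or.inl ⟨e₀, he₀, rfl⟩
    · exact Or.inr ⟨(i, c), rfl⟩

lemma inr_mem_pend (r n k : ℕ) (i : Fin n) (c : Fin k) (t : Fin (r - 1)) :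
    Sum.inr (i, c, t) ∈ pend r n k i c :=
  Finset.mem_insert_of_mem (Finset.mem_image_of_mem _ (Finset.mem_univ t))

lemma pend_injective (r n k : ℕ) (hr : 2 ≤ r) (i : Fin n) :
    Function.Injective (pend r n k i) := by
  intro c c' h
  have t0 : Fin (r - 1) := ⟨0, by omega⟩
  have := inr_mem_pend r n k i c t0
  rw [h, mem_pend_inr] at this
  exact this.2

lemma filter_pend_inl (r n k : ℕ) (hr : 2 ≤ r) (E : Finset (Finset (Fin n))) (i : Fin n) :
    (pendantEdges r n k E).filter (fun e => Sum.inl i ∈ e)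
      = (E.filter (fun e => i ∈ e)).image (fun e => e.map ⟨Sum.inl, Sum.inl_injective⟩)
        ∪ (Finset.univ : Finset (Fin k)).image (fun c => pend r n k i c) := by
  ext e
  simp only [Finset.mem_filter, mem_pendantEdges, Finset.mem_union, Finset.mem_image,
    Finset.mem_univ, true_and]
  constructor
  · rintro ⟨(⟨e₀, he₀, rfl⟩ | ⟨i', c, rfl⟩), hm⟩
    · have hm' : i ∈ e₀ := by simpa using hm
      exact Or.inl ⟨e₀, by simp [he₀, hm'], rfl⟩
    · rw [mem_pend_inl] at hm
      subst hm
      exact Or.inr ⟨c, rfl⟩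
  · rintro (⟨e₀, ⟨h1, h2⟩, rfl⟩ | ⟨c, rfl⟩)
    · exact ⟨Or.inl ⟨e₀, h1, rfl⟩, by simpa using h2⟩
    · exact ⟨Or.inr ⟨i, c, rfl⟩, Finset.mem_insert_self _ _⟩

lemma filter_pend_inr (r n k : ℕ) (hr : 2 ≤ r) (E : Finset (Finset (Fin n)))
    (i : Fin n) (c : Fin k) (t : Fin (r - 1)) :
    (pendantEdges r n k E).filter (fun e => Sum.inr (i, c, t) ∈ e) = {pend r n k i c} := by
  ext e
  simp only [Finset.mem_filter, mem_pendantEdges, Finset.mem_singleton]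
  constructor
  · rintro ⟨(⟨e₀, he₀, rfl⟩ | ⟨i', c', rfl⟩), hm⟩
    · rw [Finset.mem_map] at hm
      obtain ⟨a, _, ha⟩ := hm
      exact absurd ha (by simp)
    · rw [mem_pend_inr] at hm
      rw [hm.1, hm.2]
  · rintro rfl
    exact ⟨Or.inr ⟨i, c, rfl⟩, inr_mem_pend r n k i c t⟩

lemma disj_images (r n k : ℕ) (hr : 2 ≤ r) (E : Finset (Finset (Fin n))) (i : Fin n) :
    Disjoint ((E.filter (fun e => i ∈ e)).image
        (fun e => e.map ⟨Sum.inl, Sum.inl_injective⟩))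
      ((Finset.univ : Finset (Fin k)).image (fun c => pend r n k i c)) := by
  rw [Finset.disjoint_left]
  rintro e he1 he2
  rw [Finset.mem_image] at he1 he2
  obtain ⟨e₀, _, rfl⟩ := he1
  obtain ⟨c, _, hc⟩ := he2
  have t0 : Fin (r - 1) := ⟨0, by omega⟩
  have := inr_mem_pend r n k i c t0
  rw [hc, Finset.mem_map] at this
  obtain ⟨a, _, ha⟩ := this
  exact absurd ha (by simp)

lemma hdeg_card {V : Type*} [DecidableEq V] (E : Finset (Finset V)) (v : V) :
    ((E.filter fun e => v ∈ e).card) = (E.filter fun e => v ∈ e).card := rfl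

lemma lap_sum {V : Type*} [Fintype V] [DecidableEq V] (r : ℕ)
    (E : Finset (Finset V)) (hu : ∀ e ∈ E, e.card = r) (j : V) (x : V → ℂ) :
    ∑ f : Fin (r - 1) → V, lapEntry r E j f * ∏ i, x (f i)
      = (hdegree E j : ℂ) * x j ^ (r - 1)
        - ∑ e ∈ E.filter (fun e => j ∈ e), ∏ v ∈ e.erase j, x v := by
  unfold lapEntry
  simp only [sub_mul]
  rw [Finset.sum_sub_distrib, D_sum, adj_sum r E hu]

lemma sig_sum {V : Type*} [Fintype V] [DecidableEq V] (r : ℕ)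
    (E : Finset (Finset V)) (hu : ∀ e ∈ E, e.card = r) (j : V) (x : V → ℂ) :
    ∑ f : Fin (r - 1) → V, signlessEntry r E j f * ∏ i, x (f i)
      = (hdegree E j : ℂ) * x j ^ (r - 1)
        + ∑ e ∈ E.filter (fun e => j ∈ e), ∏ v ∈ e.erase j, x v := by
  unfold signlessEntry
  simp only [add_mul]
  rw [Finset.sum_add_distrib, D_sum, adj_sum r E hu]

lemma hdeg_pend_inl (r n k : ℕ) (hr : 2 ≤ r) (E : Finset (Finset (Fin n))) (i : Fin n) :
    hdegree (pendantEdges r n k E) (Sum.inl i) = hdegree E i + k := by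
  unfold hdegree
  rw [filter_pend_inl r n k hr E i, Finset.card_union_of_disjoint (disj_images r n k hr E i),
    Finset.card_image_of_injective _ (Finset.map_injective _),
    Finset.card_image_of_injective _ (pend_injective r n k hr i),
    Finset.card_univ, Fintype.card_fin]

lemma hdeg_pend_inr (r n k : ℕ) (hr : 2 ≤ r) (E : Finset (Finset (Fin n)))
    (i : Fin n) (c : Fin k) (t : Fin (r - 1)) :
    hdegree (pendantEdges r n k E) (Sum.inr (i, c, t)) = 1 := by
  unfold hdegree
  rw [filter_pend_inr r n k hr E i c t, Finset.card_singleton]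

lemma pendantEdges_card (r n k : ℕ) (hr : 2 ≤ r) (E : Finset (Finset (Fin n)))
    (hu : ∀ e ∈ E, e.card = r) :
    ∀ e ∈ pendantEdges r n k E, e.card = r := by
  intro e he
  rw [mem_pendantEdges] at he
  rcases he with ⟨e₀, he₀, rfl⟩ | ⟨i, c, rfl⟩
  · rw [Finset.card_map]; exact hu e₀ he₀
  · exact pend_card r n k hr i c

lemma sum_erase_inl (r n k : ℕ) (hr : 2 ≤ r) (E : Finset (Finset (Fin n))) (i : Fin n)
    (x : Fin n ⊕ Fin n × Fin k × Fin (r - 1) → ℂ) :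
    ∑ e ∈ (pendantEdges r n k E).filter (fun e => Sum.inl i ∈ e),
        ∏ v ∈ e.erase (Sum.inl i), x v
      = (∑ e ∈ E.filter (fun e => i ∈ e), ∏ v ∈ e.erase i, x (Sum.inl v))
        + ∑ c : Fin k, ∏ t : Fin (r - 1), x (Sum.inr (i, c, t)) := by
  rw [filter_pend_inl r n k hr E i,
    Finset.sum_union (disj_images r n k hr E i),
    Finset.sum_image (fun a _ b _ h => Finset.map_injective _ h),
    Finset.sum_image (fun a _ b _ h => pend_injective r n k hr i h)]
  congr 1
  · apply Finset.sum_congr rfl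
    intro e _
    rw [show (Sum.inl i : Fin n ⊕ Fin n × Fin k × Fin (r - 1))
        = (⟨Sum.inl, Sum.inl_injective⟩ : Fin n ↪ _) i from rfl,
      ← Finset.map_erase, Finset.prod_map]
    rfl
  · apply Finset.sum_congr rfl
    intro c _
    rw [pend, Finset.erase_insert (inl_notMem_image r n k i i c),
      Finset.prod_image (fun a _ b _ h => inr_injective r n k i c h)]

lemma sum_erase_inr (r n k : ℕ) (hr : 2 ≤ r) (E : Finset (Finset (Fin n)))
    (i : Fin n) (c : Fin k) (t : Fin (r - 1))
    (x : Fin n ⊕ Fin n × Fin k × Fin (r - 1) → ℂ) :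
    ∑ e ∈ (pendantEdges r n k E).filter (fun e => Sum.inr (i, c, t) ∈ e),
        ∏ v ∈ e.erase (Sum.inr (i, c, t)), x v
      = x (Sum.inl i) * ∏ s ∈ Finset.univ.erase t, x (Sum.inr (i, c, s)) := by
  rw [filter_pend_inr r n k hr E i c t, Finset.sum_singleton, pend,
    Finset.erase_insert_of_ne (by simp),
    Finset.prod_insert (fun h => inl_notMem_image r n k i i c (Finset.mem_of_mem_erase h)),
    ← Finset.image_erase (inr_injective r n k i c),
    Finset.prod_image (fun a _ b _ h => inr_injective r n k i c h)]

/-- Laplacian and signless Laplacian eigenvalues of `Ĥ(k)`. -/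
theorem stmt14 (r n k : ℕ) (hr : 2 ≤ r) (hk : 1 ≤ k)
    (E : Finset (Finset (Fin n))) (hu : ∀ e ∈ E, e.card = r) :
    (∀ (theta mu : ℂ) (w : Fin n → ℂ),
        IsEigenpair r (lapEntry r E) theta w → mu ≠ 1 →
        (mu - theta - k) * (1 - mu) ^ (r - 1) + k = 0 →
        IsEigenpair r (lapEntry r (pendantEdges r n k E)) mu
          (Sum.elim w fun p => w p.1 / (1 - mu))) ∧
    (∀ (beta mu : ℂ) (z : Fin n → ℂ),
        IsEigenpair r (signlessEntry r E) beta z → mu ≠ 1 →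
        (mu - beta - k) * (mu - 1) ^ (r - 1) - k = 0 →
        IsEigenpair r (signlessEntry r (pendantEdges r n k E)) mu
          (Sum.elim z fun p => z p.1 / (mu - 1))) := by
  have hu' := pendantEdges_card r n k hr E hu
  constructor
  · intro theta mu w hw hmu hcond
    obtain ⟨hw0, heig⟩ := hw
    have h1 : (1 : ℂ) - mu ≠ 0 := sub_ne_zero.mpr (Ne.symm hmu)
    have hp : ((1 : ℂ) - mu) ^ (r - 1) ≠ 0 := pow_ne_zero _ h1
    constructor
    · intro h
      apply hw0
      funext i
      exact congrFun h (Sum.inl i)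
    · intro j
      rw [lap_sum r _ hu' j]
      cases j with
      | inl i =>
        rw [sum_erase_inl r n k hr E i, hdeg_pend_inl r n k hr E i]
        have hS := heig i
        rw [lap_sum r E hu i w] at hS
        simp only [Sum.elim_inl, Sum.elim_inr]
        rw [Finset.prod_const, Finset.card_univ, Fintype.card_fin,
          Finset.sum_const, Finset.card_univ, Fintype.card_fin, nsmul_eq_mul,
          div_pow]
        push_cast
        have key : ((hdegree E i : ℂ) + k) - ((hdegree E i : ℂ) - theta)
            - k / ((1 - mu) ^ (r - 1)) - mu = 0 := by
          field_simp
          linear_combination -hcond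
        set W := w i ^ (r - 1)
        set P := ((1 : ℂ) - mu) ^ (r - 1)
        linear_combination hS + W * key
      | inr p =>
        obtain ⟨i, c, t⟩ := p
        rw [sum_erase_inr r n k hr E i c t, hdeg_pend_inr r n k hr E i c t]
        simp only [Sum.elim_inl, Sum.elim_inr]
        rw [Finset.prod_const, Finset.card_erase_of_mem (Finset.mem_univ t),
          Finset.card_univ, Fintype.card_fin]
        have h2 : r - 1 - 1 = r - 2 := by omega
        have h3 : r - 1 = (r - 2) + 1 := by omega
        rw [h2, h3, pow_succ]
        push_cast
        field_simp
        ring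
  · intro beta mu z hz hmu hcond
    obtain ⟨hz0, heig⟩ := hz
    have h1 : (mu : ℂ) - 1 ≠ 0 := sub_ne_zero.mpr hmu
    have hp : ((mu : ℂ) - 1) ^ (r - 1) ≠ 0 := pow_ne_zero _ h1
    constructor
    · intro h
      apply hz0
      funext i
      exact congrFun h (Sum.inl i)
    · intro j
      rw [sig_sum r _ hu' j]
      cases j with
      | inl i =>
        rw [sum_erase_inl r n k hr E i, hdeg_pend_inl r n k hr E i]
        have hS := heig i
        rw [sig_sum r E hu i z] at hS
        simp only [Sum.elim_inl, Sum.elim_inr]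
        rw [Finset.prod_const, Finset.card_univ, Fintype.card_fin,
          Finset.sum_const, Finset.card_univ, Fintype.card_fin, nsmul_eq_mul,
          div_pow]
        push_cast
        have key : ((hdegree E i : ℂ) + k) + ((beta - (hdegree E i : ℂ)))
            + k / ((mu - 1) ^ (r - 1)) - mu = 0 := by
          field_simp
          linear_combination -hcond
        set W := z i ^ (r - 1)
        set P := ((mu : ℂ) - 1) ^ (r - 1)
        linear_combination hS + W * key
      | inr p =>
        obtain ⟨i, c, t⟩ := p
        rw [sum_erase_inr r n k hr E i c t, hdeg_pend_inr r n k hr E i c t]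
        simp only [Sum.elim_inl, Sum.elim_inr]
        rw [Finset.prod_const, Finset.card_erase_of_mem (Finset.mem_univ t),
          Finset.card_univ, Fintype.card_fin]
        have h2 : r - 1 - 1 = r - 2 := by omega
        have h3 : r - 1 = (r - 2) + 1 := by omega
        rw [h2, h3, pow_succ]
        push_cast
        field_simp
        ring
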